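/- Let f : [0,T] × ℝⁿ → ℝⁿ be continuous and let x ∈ C([0,T],ℝⁿ). Define V(φ)(t) := ∫₀ᵗ φ(s) ds and the average φ̄ := (1/T)∫₀ᵀ φ(t) dt. If x satisfies x = x̄ + T·(N(x))̄ + V(N(x) − (N(x))̄) − (V(N(x) − (N(x))̄))̄ where N(x)(t) := f(t,x(t)), then x is C¹, x'(t) = f(t,x(t)) for all t ∈ [0,T], and x(0) = x(T). -/

import Mathlib

/-!
Averaging the fixed-point equation over `[0, T]` kills the term `V(N x − N̄) − (V(N x − N̄))̄`
and leaves `x̄ = x̄ + T • N̄`, so `N̄ = 0`. Then `x` is a constant plus the primitive of `N x`,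
hence solves `x' = N x` by the fundamental theorem of calculus, and
`x T − x 0 = ∫₀ᵀ (N x − N̄) = 0`.
-/

open Set MeasureTheory intervalIntegral

variable {E : Type*} [NormedAddCommGroup E] [NormedSpace ℝ E]

theorem hasDerivWithinAt_integral_Icc [CompleteSpace E] {g : ℝ → E} {a b t : ℝ}
    (hg : ContinuousOn g (Icc a b)) (ht : t ∈ Icc a b) :
    HasDerivWithinAt (fun u => ∫ s in a..u, g s) (g t) (Icc a b) t := by
  have : Fact (t ∈ Icc a b) := ⟨ht⟩
  have hgi : IntervalIntegrable g volume a t :=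
    (hg.mono (by rw [uIcc_of_le ht.1]; exact Icc_subset_Icc_right ht.2)).intervalIntegrable
  exact integral_hasDerivWithinAt_right hgi
    (hg.stronglyMeasurableAtFilter_nhdsWithin measurableSet_Icc t) (hg t ht)

noncomputable def mean (T : ℝ) (φ : ℝ → E) : E := T⁻¹ • ∫ s in (0:ℝ)..T, φ s

theorem mean_congr {T : ℝ} (hT : 0 ≤ T) {φ ψ : ℝ → E} (h : EqOn φ ψ (Icc 0 T)) :
    mean T φ = mean T ψ := by
  rw [mean, mean, integral_congr (by rwa [uIcc_of_le hT])]

theorem integral_sub_mean [CompleteSpace E] {T : ℝ} (hT : T ≠ 0) {φ : ℝ → E}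
    (hφ : IntervalIntegrable φ volume 0 T) :
    ∫ s in (0:ℝ)..T, (φ s - mean T φ) = 0 := by
  rw [integral_sub hφ intervalIntegrable_const, intervalIntegral.integral_const, sub_zero, mean,
    smul_inv_smul₀ hT, sub_self]

theorem mean_const_add_sub_mean [CompleteSpace E] {T : ℝ} (hT : T ≠ 0) {φ : ℝ → E}
    (hφ : IntervalIntegrable φ volume 0 T) (c : E) :
    mean T (fun s => c + (φ s - mean T φ)) = c := by
  rw [mean, integral_add intervalIntegrable_const (hφ.sub intervalIntegrable_const),
    integral_sub_mean hT hφ, intervalIntegral.integral_const, sub_zero, add_zero, inv_smul_smul₀ hT]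

/-- A fixed point of the operator
`K₃(x) = x̄ + T·N(x)̄ + V(N(x) − N(x)̄) − (V(N(x) − N(x)̄))̄`
is a C¹ solution of `x' = f(t,x)` on `[0,T]` with `x(0) = x(T)`. -/
theorem stmt_18 {n : ℕ}
    (f : ℝ → EuclideanSpace ℝ (Fin n) → EuclideanSpace ℝ (Fin n))
    (hf : Continuous fun p : ℝ × EuclideanSpace ℝ (Fin n) => f p.1 p.2)
    (T : ℝ) (hT : 0 < T)
    (x : ℝ → EuclideanSpace ℝ (Fin n)) (hx : ContinuousOn x (Set.Icc 0 T))
    (h : ∀ t ∈ Set.Icc (0:ℝ) T,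
      x t = (T⁻¹ • ∫ s in (0:ℝ)..T, x s)
          + T • (T⁻¹ • ∫ s in (0:ℝ)..T, f s (x s))
          + (∫ s in (0:ℝ)..t,
              (f s (x s) - T⁻¹ • ∫ r in (0:ℝ)..T, f r (x r)))
          - T⁻¹ • ∫ u in (0:ℝ)..T, (∫ s in (0:ℝ)..u,
              (f s (x s) - T⁻¹ • ∫ r in (0:ℝ)..T, f r (x r)))) :
    (∀ t ∈ Set.Icc (0:ℝ) T,
      HasDerivWithinAt x (f t (x t)) (Set.Icc 0 T) t) ∧ x 0 = x T := by
  set g : ℝ → EuclideanSpace ℝ (Fin n) := fun s => f s (x s)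
  set G : ℝ → EuclideanSpace ℝ (Fin n) := fun u => ∫ s in (0:ℝ)..u, (g s - mean T g)
  have hg : ContinuousOn g (Icc 0 T) := hf.comp_continuousOn (continuousOn_id.prodMk hx)
  have hG : ∀ t ∈ Icc 0 T, HasDerivWithinAt G (g t - mean T g) (Icc 0 T) t :=
    fun t ht => hasDerivWithinAt_integral_Icc (hg.sub continuousOn_const) ht
  have hGi : IntervalIntegrable G volume 0 T :=
    ContinuousOn.intervalIntegrable (by
      rw [uIcc_of_le hT.le]; exact fun t ht => (hG t ht).continuousWithinAt)
  have hxG : EqOn x (fun t => (mean T x + T • mean T g) + (G t - mean T G)) (Icc 0 T) :=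
    fun t ht => by rw [h t ht]; simp only [mean, G, g]; abel
  have hmean : mean T g = 0 := by
    have hfix : mean T x = mean T x + T • mean T g :=
      (mean_congr hT.le hxG).trans (mean_const_add_sub_mean hT.ne' hGi _)
    exact (smul_eq_zero.mp (left_eq_add.mp hfix)).resolve_left hT.ne'
  rw [hmean, smul_zero, add_zero] at hxG
  have hG0 : G 0 = 0 := integral_same
  have hGT : G T = 0 := integral_sub_mean hT.ne' (hg.intervalIntegrable_of_Icc hT.le)
  refine ⟨fun t ht => ?_, ?_⟩
  · have hderiv := ((hG t ht).sub_const (mean T G)).const_add (mean T x)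
    rw [hmean, sub_zero] at hderiv
    exact hderiv.congr hxG (hxG ht)
  · simp only [hxG ⟨le_rfl, hT.le⟩, hxG ⟨hT.le, le_rfl⟩, hG0, hGT]
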